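/- arXiv:1907.04535 — 3 statements merged into one kernel-verified Lean document; each statement's English description precedes it below -/
import Mathlib

section
/- For s ≥ 3, the number of maximum general position sets of P_2 □ P_s equals s(s−1)(s−2)/3. -/
/-- `S` is a general position set of `G`. -/
def isGPSet {V : Type*} (G : SimpleGraph V) (S : Set V) : Prop :=
  ∀ u ∈ S, ∀ v ∈ S, ∀ w ∈ S, u ≠ v → v ≠ w → u ≠ w →
    G.dist u v ≠ G.dist u w + G.dist w v

/-- The general position number of `G`: the largest size of a general position set. -/
noncomputable def gpNum {V : Type*} (G : SimpleGraph V) : ℕ :=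
  sSup {n | ∃ S : Finset V, isGPSet G ↑S ∧ S.card = n}

/-! In `P₂ □ Pₛ` the distance is the `ℓ¹` distance of the coordinates, so `w` lies on a geodesic
between `u` and `v` iff it lies between them in both coordinates. Hence the vertices of a general
position set with at least three elements lie in distinct columns, and whenever three of them have
columns `x < y < z`, the outer two share a row and the middle one is in the other row. A fourth
vertex contradicts this, so `gp = 3`, and the maximum general position sets are the "tents"
`{(a, x), (a + 1, y), (a, z)}` with `x < y < z`: one for each row `a` and each `3`-set of columns,
`2 * choose s 3` in all. -/

open SimpleGraph

namespace SimpleGraph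

variable {V W : Type*} {G : SimpleGraph V} {H : SimpleGraph W}

lemma dist_boxProd (hG : G.Preconnected) (hH : H.Preconnected) (x y : V × W) :
    (G □ H).dist x y = G.dist x.1 y.1 + H.dist x.2 y.2 := by
  have h := edist_boxProd (G := G) (H := H) x y
  rw [← ((hG.boxProd hH) x y).coe_dist_eq_edist, ← (hG x.1 y.1).coe_dist_eq_edist,
    ← (hH x.2 y.2).coe_dist_eq_edist] at h
  exact_mod_cast h

lemma Walk.natDist_le_length {n : ℕ} {i j : Fin n} (w : (pathGraph n).Walk i j) :
    Nat.dist i j ≤ w.length := by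
  induction w with
  | nil => simp
  | cons h _ ih =>
    rw [pathGraph_adj] at h
    simp only [Walk.length_cons, Nat.dist] at ih ⊢
    omega

lemma pathGraph_dist_le_of_add_eq {n : ℕ} (k : ℕ) (i j : Fin n) (h : i.val + k = j.val) :
    (pathGraph n).dist i j ≤ k := by
  induction k generalizing j with
  | zero => simp [Fin.ext (by omega : i.val = j.val)]
  | succ k ih =>
    let j' : Fin n := ⟨j - 1, by omega⟩
    have hadj : (pathGraph n).Adj j' j := by rw [pathGraph_adj]; simp [j']; omega
    calc (pathGraph n).dist i j ≤ (pathGraph n).dist i j' + (pathGraph n).dist j' j :=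
          hadj.reachable.dist_triangle_right i
      _ ≤ k + 1 := by
          rw [dist_eq_one_iff_adj.mpr hadj]
          have := ih j' (by simp [j']; omega)
          omega

theorem pathGraph_dist {n : ℕ} (i j : Fin n) : (pathGraph n).dist i j = Nat.dist i j := by
  wlog hij : i.val ≤ j.val generalizing i j
  · rw [dist_comm, Nat.dist_comm]
    exact this j i (by omega)
  refine le_antisymm ?_ ?_
  · rw [Nat.dist_eq_sub_of_le hij]
    exact pathGraph_dist_le_of_add_eq _ i j (by omega)
  · obtain ⟨w, hw⟩ := (pathGraph_preconnected n i j).exists_walk_length_eq_dist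
    exact hw ▸ w.natDist_le_length

end SimpleGraph

abbrev ladderGraph (n : ℕ) : SimpleGraph (Fin 2 × Fin n) := pathGraph 2 □ pathGraph n

lemma ladderGraph_dist_eq_add_iff {n : ℕ} (u v w : Fin 2 × Fin n) :
    (ladderGraph n).dist u v = (ladderGraph n).dist u w + (ladderGraph n).dist w v ↔
      w.1 ∈ Set.uIcc u.1 v.1 ∧ w.2 ∈ Set.uIcc u.2 v.2 := by
  simp only [dist_boxProd (pathGraph_preconnected 2) (pathGraph_preconnected n), pathGraph_dist,
    Set.mem_uIcc, Fin.le_def, Nat.dist]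
  omega

lemma isGPSet.mono {V : Type*} {G : SimpleGraph V} {S T : Set V} (hT : isGPSet G T) (h : S ⊆ T) :
    isGPSet G S :=
  fun u hu v hv w hw => hT u (h hu) v (h hv) w (h hw)

lemma Finset.exists_strictMono_comp_of_injOn {α β : Type*} [DecidableEq α] [LinearOrder β]
    {S : Finset α} {f : α → β} (hf : Set.InjOn f S) {k : ℕ} (hk : S.card = k) :
    ∃ e : Fin k → α, StrictMono (f ∘ e) ∧ Finset.univ.image e = S := by
  have hcard : (S.image f).card = k := (Finset.card_image_of_injOn hf).trans hk
  have hpre : ∀ i, ∃ a ∈ S, f a = (S.image f).orderEmbOfFin hcard i := fun i =>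
    Finset.mem_image.mp (Finset.orderEmbOfFin_mem _ _ i)
  choose e heS hfe using hpre
  refine ⟨e, fun i j hij => ?_, ?_⟩
  · simpa only [Function.comp_apply, hfe] using ((S.image f).orderEmbOfFin hcard).strictMono hij
  · refine Finset.Subset.antisymm (fun a ha => ?_) fun a ha => ?_
    · obtain ⟨i, -, rfl⟩ := Finset.mem_image.mp ha
      exact heS i
    · obtain ⟨i, hi⟩ : f a ∈ Set.range ((S.image f).orderEmbOfFin hcard) := by
        simpa using Finset.mem_image_of_mem f ha
      exact Finset.mem_image.mpr ⟨i, Finset.mem_univ i, hf (heS i) ha ((hfe i).trans hi)⟩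

def tent {α : Type*} [LinearOrder α] (a : Fin 2) (T : Finset α) : Finset (Fin 2 × α) :=
  T.image fun c => (if ∃ x ∈ T, ∃ z ∈ T, x < c ∧ c < z then a + 1 else a, c)

section Tent

variable {α : Type*} [LinearOrder α]

lemma tent_triple (a : Fin 2) {x y z : α} (hxy : x < y) (hyz : y < z) :
    tent a {x, y, z} = {(a, x), (a + 1, y), (a, z)} := by
  simp [tent, Finset.image_insert, hxy, hyz, hxy.trans hyz, hxy.not_gt, hyz.not_gt,
    (hxy.trans hyz).not_gt]

lemma image_snd_tent (a : Fin 2) (T : Finset α) : (tent a T).image Prod.snd = T := by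
  simp [tent, Finset.image_image, Function.comp_def]

lemma tent_inj {a a' : Fin 2} {T T' : Finset α} (hT : T.Nonempty) :
    tent a T = tent a' T' ↔ a = a' ∧ T = T' := by
  refine ⟨fun h => ?_, by rintro ⟨rfl, rfl⟩; rfl⟩
  have hTT : T = T' := by rw [← image_snd_tent a T, h, image_snd_tent]
  subst hTT
  refine ⟨?_, rfl⟩
  have hmin : ¬∃ x ∈ T, ∃ z ∈ T, x < T.min' hT ∧ T.min' hT < z :=
    fun ⟨x, hx, _, _, hxm, _⟩ => (T.min'_le x hx).not_gt hxm
  have hmem : ∀ b, (b, T.min' hT) ∈ tent b T := fun b =>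
    Finset.mem_image.mpr ⟨_, T.min'_mem hT, by rw [if_neg hmin]⟩
  obtain ⟨c, -, hc⟩ := Finset.mem_image.mp (h ▸ hmem a)
  obtain ⟨hca, rfl⟩ := Prod.mk.inj hc
  rwa [if_neg hmin, eq_comm] at hca

lemma card_tent (a : Fin 2) (T : Finset α) : (tent a T).card = T.card :=
  Finset.card_image_of_injective _ fun _ _ h => congrArg Prod.snd h

end Tent

section Ladder

variable {n : ℕ} {S : Finset (Fin 2 × Fin n)}

lemma isGPSet.row_eq_ne_of_col_lt_lt (hS : isGPSet (ladderGraph n) S) {p q r : Fin 2 × Fin n}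
    (hp : p ∈ S) (hq : q ∈ S) (hr : r ∈ S) (hpq : p.2 < q.2) (hqr : q.2 < r.2) :
    r.1 = p.1 ∧ q.1 ≠ p.1 := by
  have h := hS p hp r hr q hq (by grind) (by grind) (by grind)
  rw [Ne, ladderGraph_dist_eq_add_iff] at h
  simp only [Set.mem_uIcc, Fin.le_def, Fin.lt_def, Fin.ext_iff] at h hpq hqr ⊢
  omega

lemma isGPSet.injOn_snd (hS : isGPSet (ladderGraph n) S) (h3 : 3 ≤ S.card) :
    Set.InjOn (Prod.snd : Fin 2 × Fin n → Fin n) S := by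
  intro p hp q hq hpq
  by_contra! hne
  obtain ⟨w, hw⟩ : ((S.erase p).erase q).Nonempty := by
    rw [← Finset.card_pos, Finset.card_erase_of_mem (by simpa [Ne.symm hne] using hq),
      Finset.card_erase_of_mem hp]
    omega
  simp only [Finset.mem_erase] at hw
  obtain ⟨hwq, hwp, hw⟩ := hw
  have hpw := hS q hq w hw p hp hwq.symm hwp hne.symm
  have hqw := hS p hp w hw q hq hwp.symm hwq hne
  rw [Ne, ladderGraph_dist_eq_add_iff] at hpw hqw
  simp only [Set.mem_uIcc, Fin.le_def, Fin.ext_iff] at hpw hqw hpq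
  omega

lemma isGPSet.card_le_three (hS : isGPSet (ladderGraph n) S) : S.card ≤ 3 := by
  by_contra! h
  obtain ⟨T, hTS, hT⟩ := S.exists_subset_card_eq h
  have hT' : isGPSet (ladderGraph n) T := hS.mono (Finset.coe_subset.mpr hTS)
  obtain ⟨e, he, hrange⟩ := Finset.exists_strictMono_comp_of_injOn (hT'.injOn_snd (by omega)) hT
  have hmem : ∀ i, e i ∈ T := fun i => hrange ▸ Finset.mem_image_of_mem e (Finset.mem_univ i)
  have h013 :=
    hT'.row_eq_ne_of_col_lt_lt (hmem 0) (hmem 1) (hmem 3) (he (by decide)) (he (by decide))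
  have h123 :=
    hT'.row_eq_ne_of_col_lt_lt (hmem 1) (hmem 2) (hmem 3) (he (by decide)) (he (by decide))
  exact h013.2 (h123.1.symm.trans h013.1)

lemma isGPSet.exists_eq_tent (hS : isGPSet (ladderGraph n) S) (h3 : S.card = 3) :
    ∃ a T, T.card = 3 ∧ tent a T = S := by
  obtain ⟨e, he, hrange⟩ := Finset.exists_strictMono_comp_of_injOn (hS.injOn_snd h3.ge) h3
  have hmem : ∀ i, e i ∈ S := fun i => hrange ▸ Finset.mem_image_of_mem e (Finset.mem_univ i)
  obtain ⟨h20, h10⟩ :=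
    hS.row_eq_ne_of_col_lt_lt (hmem 0) (hmem 1) (hmem 2) (he (by decide)) (he (by decide))
  have h01 : (e 0).2 < (e 1).2 := he (by decide)
  have h12 : (e 1).2 < (e 2).2 := he (by decide)
  refine ⟨(e 0).1, {(e 0).2, (e 1).2, (e 2).2}, ?_, ?_⟩
  · exact Finset.card_eq_three.mpr ⟨_, _, _, h01.ne, (h01.trans h12).ne, h12.ne, rfl⟩
  · have e1 : ((e 0).1 + 1, (e 1).2) = e 1 :=
      Prod.ext (show (e 0).1 + 1 = (e 1).1 by omega) rfl
    have e2 : ((e 0).1, (e 2).2) = e 2 := Prod.ext h20.symm rfl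
    rw [tent_triple _ h01 h12, e1, e2, ← hrange]
    simp [Fin.univ_succ, Finset.image_insert]

lemma isGPSet_tent (a : Fin 2) {T : Finset (Fin n)} (hT : T.card = 3) :
    isGPSet (ladderGraph n) (tent a T) := by
  obtain ⟨e, he, hrange⟩ := Finset.exists_strictMono_comp_of_injOn (Set.injOn_id _) hT
  have hT3 : T = {e 0, e 1, e 2} := by
    rw [← hrange]
    simp [Fin.univ_succ, Finset.image_insert]
  have h01 : e 0 < e 1 := he (by decide)
  have h12 : e 1 < e 2 := he (by decide)
  rw [hT3, tent_triple a h01 h12]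
  intro u hu v hv w hw huv hvw huw
  rw [Ne, ladderGraph_dist_eq_add_iff]
  simp only [Finset.coe_insert, Finset.coe_singleton, Set.mem_insert_iff,
    Set.mem_singleton_iff] at hu hv hw
  rw [Fin.lt_def] at h01 h12
  rcases hu with rfl | rfl | rfl <;> rcases hv with rfl | rfl | rfl <;>
    rcases hw with rfl | rfl | rfl <;>
    first
    | contradiction
    | simp only [Set.mem_uIcc, Fin.le_def]; omega

lemma gpNum_ladderGraph (hn : 3 ≤ n) : gpNum (ladderGraph n) = 3 := by
  obtain ⟨T, -, hT⟩ := (Finset.univ : Finset (Fin n)).exists_subset_card_eq (by simpa using hn)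
  have hmem : 3 ∈ {k | ∃ S : Finset (Fin 2 × Fin n), isGPSet (ladderGraph n) S ∧ S.card = k} :=
    ⟨tent 0 T, isGPSet_tent 0 hT, (card_tent 0 T).trans hT⟩
  have hbdd : ∀ k ∈ {k | ∃ S : Finset (Fin 2 × Fin n), isGPSet (ladderGraph n) S ∧ S.card = k},
      k ≤ 3 := fun _ ⟨S, hS, hk⟩ => hk ▸ hS.card_le_three
  exact le_antisymm (csSup_le ⟨3, hmem⟩ hbdd) (le_csSup ⟨3, hbdd⟩ hmem)

lemma ncard_setOf_isGPSet_card_eq_three :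
    {S : Finset (Fin 2 × Fin n) | isGPSet (ladderGraph n) S ∧ S.card = 3}.ncard =
      2 * n.choose 3 := by
  have hset : {S : Finset (Fin 2 × Fin n) | isGPSet (ladderGraph n) S ∧ S.card = 3} =
      ↑((Finset.univ ×ˢ Finset.univ.powersetCard 3).image
        fun p : Fin 2 × Finset (Fin n) => tent p.1 p.2) := by
    ext S
    simp only [Set.mem_ofPred_eq, Finset.coe_image, Set.mem_image, Finset.mem_coe,
      Finset.mem_product, Finset.mem_univ, true_and, Finset.mem_powersetCard_univ, Prod.exists]
    constructor
    · rintro ⟨hS, h3⟩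
      exact hS.exists_eq_tent h3
    · rintro ⟨a, T, hT, rfl⟩
      exact ⟨isGPSet_tent a hT, (card_tent a T).trans hT⟩
  rw [hset, Set.ncard_coe_finset, Finset.card_image_of_injOn, Finset.card_product,
    Finset.card_univ, Fintype.card_fin, Finset.card_powersetCard, Finset.card_univ,
    Fintype.card_fin]
  rintro ⟨a, T⟩ hT ⟨a', T'⟩ - h
  have hT3 : T.card = 3 := by simpa using hT
  obtain ⟨rfl, rfl⟩ := (tent_inj (Finset.card_pos.mp (by omega : 0 < T.card))).mp h
  rfl

end Ladder

theorem stmt_4 (s : ℕ) (hs : 3 ≤ s) :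
    3 * ({S : Finset (Fin 2 × Fin s) |
        isGPSet ((SimpleGraph.pathGraph 2).boxProd (SimpleGraph.pathGraph s)) ↑S ∧
        S.card = gpNum ((SimpleGraph.pathGraph 2).boxProd (SimpleGraph.pathGraph s))}.ncard)
      = s * (s - 1) * (s - 2) := by
  rw [gpNum_ladderGraph hs, ncard_setOf_isGPSet_card_eq_three]
  calc 3 * (2 * s.choose 3) = Nat.factorial 3 * s.choose 3 := by simp [Nat.factorial]; ring
    _ = s.descFactorial 3 := (Nat.descFactorial_eq_factorial_mul_choose s 3).symm
    _ = s * (s - 1) * (s - 2) := by simp [Nat.descFactorial]; ring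
end

section
/- For s ≥ 9, the set {(0,1), (1,4), (2, ⌊s/2⌋+2), (3,0), (4,3)} is a general position set of P_5 □ C_s; hence gp(P_5 □ C_s) ≥ 5. -/
/-- Cyclic distance on the cycle `C_s` with vertex set `Fin s`. -/
def cycDist {s : ℕ} (k k' : Fin s) : ℕ :=
  min ((k : ℤ) - k').natAbs (s - ((k : ℤ) - k').natAbs)

/-- Distance on the cylinder `P_r □ C_s` with vertex set `Fin r × Fin s`. -/
def cylDist {r s : ℕ} (u v : Fin r × Fin s) : ℕ :=
  ((u.1 : ℤ) - v.1).natAbs + cycDist u.2 v.2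

/-- General position with respect to a distance function `d`. -/
def isGPSetD {α : Type*} (d : α → α → ℕ) (S : Set α) : Prop :=
  ∀ u ∈ S, ∀ v ∈ S, ∀ w ∈ S, u ≠ v → v ≠ w → u ≠ w → d u v ≠ d u w + d w v

/-- The general position number with respect to a distance function `d`. -/
noncomputable def gpNumD {α : Type*} (d : α → α → ℕ) : ℕ :=
  sSup {n | ∃ S : Finset α, isGPSetD d ↑S ∧ S.card = n}

/-!
Every point of the set lies in its own row of the cylinder. Since the distance of `P_r □ C_s`
is the sum of the path distance and the cycle distance, and each is a metric, a point `w`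
lies on a geodesic between `u` and `v` only if it does so in both factors. In the path factor
this forces the row of `w` strictly between those of `u` and `v`, which leaves ten triples;
for each of them the columns `1, 4, ⌊s/2⌋ + 2, 0, 3` violate the equality on `C_s` once `s ≥ 9`.
-/

theorem cycDist_comm {s : ℕ} (a b : Fin s) : cycDist a b = cycDist b a := by
  unfold cycDist; omega

theorem cycDist_triangle {s : ℕ} (a b c : Fin s) :
    cycDist a c ≤ cycDist a b + cycDist b c := by
  unfold cycDist; omega

theorem cylDist_eq_add_iff {r s : ℕ} (u v w : Fin r × Fin s) :
    cylDist u v = cylDist u w + cylDist w v ↔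
      ((u.1 : ℤ) - v.1).natAbs = ((u.1 : ℤ) - w.1).natAbs + ((w.1 : ℤ) - v.1).natAbs ∧
        cycDist u.2 v.2 = cycDist u.2 w.2 + cycDist w.2 v.2 := by
  have := cycDist_triangle u.2 w.2 v.2
  unfold cylDist; omega

theorem isGPSetD_cylDist_of_injOn_fst {r s : ℕ} {S : Set (Fin r × Fin s)}
    (hinj : S.InjOn Prod.fst)
    (hcyc : ∀ u ∈ S, ∀ w ∈ S, ∀ v ∈ S, u.1 < w.1 → w.1 < v.1 →
      cycDist u.2 v.2 ≠ cycDist u.2 w.2 + cycDist w.2 v.2) :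
    isGPSetD cylDist S := by
  intro u hu v hv w hw _ hvw huw heq
  obtain ⟨hrow, hcol⟩ := (cylDist_eq_add_iff u v w).1 heq
  have huw' : u.1 ≠ w.1 := fun h => huw (hinj hu hw h)
  have hwv' : w.1 ≠ v.1 := fun h => hvw (hinj hv hw h.symm)
  rw [Ne, Fin.ext_iff] at huw' hwv'
  rcases lt_or_gt_of_ne huw' with h | h
  · exact hcyc u hu w hw v hv h (Fin.lt_def.2 (by omega)) hcol
  · refine hcyc v hv w hw u hu (Fin.lt_def.2 (by omega)) h ?_
    rw [cycDist_comm v.2, cycDist_comm w.2, cycDist_comm v.2, hcol, add_comm]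

theorem card_le_gpNumD {α : Type*} [Finite α] {d : α → α → ℕ} {S : Finset α}
    (hS : isGPSetD d S) : S.card ≤ gpNumD d := by
  have := Fintype.ofFinite α
  refine le_csSup ⟨Fintype.card α, ?_⟩ ⟨S, hS, rfl⟩
  rintro n ⟨T, -, rfl⟩
  exact T.card_le_univ

theorem stmt_15 (s : ℕ) (hs : 9 ≤ s) :
    isGPSetD (cylDist (r := 5) (s := s))
        {((0 : Fin 5), (⟨1, by omega⟩ : Fin s)), (1, ⟨4, by omega⟩),
         (2, ⟨s / 2 + 2, by omega⟩), (3, ⟨0, by omega⟩), (4, ⟨3, by omega⟩)} ∧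
      5 ≤ gpNumD (cylDist (r := 5) (s := s)) := by
  set S : Finset (Fin 5 × Fin s) := {((0 : Fin 5), (⟨1, by omega⟩ : Fin s)), (1, ⟨4, by omega⟩),
    (2, ⟨s / 2 + 2, by omega⟩), (3, ⟨0, by omega⟩), (4, ⟨3, by omega⟩)} with hS
  have hrows : S.image Prod.fst = Finset.univ := by
    simp only [hS, Finset.image_insert, Finset.image_singleton]; decide
  have hcard : S.card = 5 := by simp [hS, Finset.card_insert_of_notMem]
  have hgp : isGPSetD cylDist (S : Set (Fin 5 × Fin s)) := by
    apply isGPSetD_cylDist_of_injOn_fst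
    · exact Finset.injOn_of_card_image_eq (by rw [hrows, hcard]; rfl)
    · simp only [hS, Finset.coe_insert, Finset.coe_singleton, Set.mem_insert_iff,
        Set.mem_singleton_iff]
      rintro u (rfl | rfl | rfl | rfl | rfl) w (rfl | rfl | rfl | rfl | rfl)
        v (rfl | rfl | rfl | rfl | rfl) huw hwv <;> dsimp only at huw hwv ⊢ <;>
        first
          | exact absurd huw (by decide)
          | exact absurd hwv (by decide)
          | (simp only [cycDist]; omega)
  exact ⟨by simpa [hS] using hgp, hcard ▸ card_le_gpNumD hgp⟩
end

section
/- If S is a general position set in the grid P_r □ P_s and S contains a corner vertex (a vertex of degree 2), then |S| ≤ 3. -/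
/-- Manhattan distance on the grid `P_r □ P_s` with vertex set `Fin r × Fin s`. -/
def gridDist {r s : ℕ} (u v : Fin r × Fin s) : ℕ :=
  ((u.1 : ℤ) - v.1).natAbs + ((u.2 : ℤ) - v.2).natAbs

/-!
Reflecting the grid so that the corner `x` becomes the origin turns the grid distance into the
`ℓ¹` distance on `ℕ × ℕ`. If `p ≤ q` coordinatewise then `p` lies on a geodesic from the origin
to `q`, so the other points of `S` form an antichain. Among three points of an antichain, the one
whose first coordinate is the middle one also has the middle second coordinate, so it lies on a
geodesic between the other two.
-/

open Set

def l1Dist (u v : ℕ × ℕ) : ℕ :=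
  ((u.1 : ℤ) - v.1).natAbs + ((u.2 : ℤ) - v.2).natAbs

theorem l1Dist_eq_add_of_mem_uIcc {u v w : ℕ × ℕ} (h₁ : w.1 ∈ uIcc u.1 v.1)
    (h₂ : w.2 ∈ uIcc u.2 v.2) : l1Dist u v = l1Dist u w + l1Dist w v := by
  rw [mem_uIcc] at h₁ h₂
  unfold l1Dist
  omega

theorem isGPSetD.mono {α : Type*} {d : α → α → ℕ} {S T : Set α} (hT : isGPSetD d T)
    (hST : S ⊆ T) : isGPSetD d S :=
  fun u hu v hv w hw ↦ hT u (hST hu) v (hST hv) w (hST hw)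

theorem isGPSetD.image {α β : Type*} {d : α → α → ℕ} {d' : β → β → ℕ} {S : Set α} {f : α → β}
    (hS : isGPSetD d S) (hf : Function.Injective f) (hd : ∀ u v, d' (f u) (f v) = d u v) :
    isGPSetD d' (f '' S) := by
  rintro _ ⟨u, hu, rfl⟩ _ ⟨v, hv, rfl⟩ _ ⟨w, hw, rfl⟩ huv hvw huw
  simp only [hd]
  exact hS u hu v hv w hw (hf.ne_iff.mp huv) (hf.ne_iff.mp hvw) (hf.ne_iff.mp huw)

theorem mem_uIcc_or_mem_uIcc_or_mem_uIcc {α : Type*} [LinearOrder α] (a b c : α) :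
    a ∈ uIcc b c ∨ b ∈ uIcc a c ∨ c ∈ uIcc a b := by
  simp only [mem_uIcc]
  rcases le_total a b with hab | hab <;> rcases le_total b c with hbc | hbc <;>
    rcases le_total a c with hac | hac <;> tauto

theorem IsAntichain.snd_mem_uIcc_of_fst_mem_uIcc {α β : Type*} [LinearOrder α] [LinearOrder β]
    {A : Set (α × β)} (hA : IsAntichain (· ≤ ·) A) {u v w : α × β} (hu : u ∈ A) (hv : v ∈ A)
    (hw : w ∈ A) (hwu : w ≠ u) (hwv : w ≠ v) (h : w.1 ∈ uIcc u.1 v.1) :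
    w.2 ∈ uIcc u.2 v.2 := by
  have huw : ¬(u.1 ≤ w.1 ∧ u.2 ≤ w.2) := hA hu hw hwu.symm
  have hwu' : ¬(w.1 ≤ u.1 ∧ w.2 ≤ u.2) := hA hw hu hwu
  have hvw : ¬(v.1 ≤ w.1 ∧ v.2 ≤ w.2) := hA hv hw hwv.symm
  have hwv' : ¬(w.1 ≤ v.1 ∧ w.2 ≤ v.2) := hA hw hv hwv
  rw [mem_uIcc] at h ⊢
  rcases h with ⟨h₁, h₂⟩ | ⟨h₁, h₂⟩
  · exact Or.inr ⟨(not_le.mp fun h ↦ hwv' ⟨h₂, h⟩).le, (not_le.mp fun h ↦ huw ⟨h₁, h⟩).le⟩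
  · exact Or.inl ⟨(not_le.mp fun h ↦ hwu' ⟨h₂, h⟩).le, (not_le.mp fun h ↦ hvw ⟨h₁, h⟩).le⟩

theorem isAntichain_diff_zero_of_isGPSetD {T : Set (ℕ × ℕ)} (hT : isGPSetD l1Dist T)
    (h0 : 0 ∈ T) : IsAntichain (· ≤ ·) (T \ {0}) := by
  rintro p ⟨hp, hp0⟩ q ⟨hq, hq0⟩ hpq hle
  refine hT 0 h0 q hq p hp (Ne.symm hq0) (Ne.symm hpq) (Ne.symm hp0) ?_
  exact l1Dist_eq_add_of_mem_uIcc (mem_uIcc_of_le (Nat.zero_le _) hle.1)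
    (mem_uIcc_of_le (Nat.zero_le _) hle.2)

theorem card_le_two_of_isAntichain_of_isGPSetD {A : Finset (ℕ × ℕ)}
    (hA : IsAntichain (· ≤ ·) (A : Set (ℕ × ℕ))) (hgp : isGPSetD l1Dist A) : A.card ≤ 2 := by
  have not_between : ∀ u ∈ A, ∀ v ∈ A, ∀ w ∈ A, u ≠ v → v ≠ w → u ≠ w → w.1 ∉ uIcc u.1 v.1 :=
    fun u hu v hv w hw huv hvw huw h ↦ hgp u hu v hv w hw huv hvw huw
      (l1Dist_eq_add_of_mem_uIcc h (hA.snd_mem_uIcc_of_fst_mem_uIcc hu hv hw huw.symm hvw.symm h))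
  by_contra! hcard
  obtain ⟨a, b, c, ha, hb, hc, hab, hac, hbc⟩ := Finset.two_lt_card_iff.mp hcard
  rcases mem_uIcc_or_mem_uIcc_or_mem_uIcc a.1 b.1 c.1 with h | h | h
  · exact not_between b hb c hc a ha hbc hac.symm hab.symm h
  · exact not_between a ha c hc b hb hac hbc.symm hab h
  · exact not_between a ha b hb c hc hab hbc hac h

theorem card_le_three_of_isGPSetD_l1Dist {T : Finset (ℕ × ℕ)} (hT : isGPSetD l1Dist T)
    (h0 : 0 ∈ T) : T.card ≤ 3 := by
  have hA : IsAntichain (· ≤ ·) ((T.erase 0 : Finset (ℕ × ℕ)) : Set (ℕ × ℕ)) := by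
    rw [Finset.coe_erase]
    exact isAntichain_diff_zero_of_isGPSetD hT h0
  have h2 := card_le_two_of_isAntichain_of_isGPSetD hA
    (hT.mono (Finset.coe_subset.mpr (Finset.erase_subset 0 T)))
  rw [Finset.card_erase_of_mem h0] at h2
  omega

section Grid

variable {r s : ℕ}

def cornerCoords (x p : Fin r × Fin s) : ℕ × ℕ :=
  (((p.1 : ℤ) - x.1).natAbs, ((p.2 : ℤ) - x.2).natAbs)

@[simp]
theorem cornerCoords_self (x : Fin r × Fin s) : cornerCoords x x = 0 := by
  simp [cornerCoords]

theorem l1Dist_cornerCoords {x : Fin r × Fin s} (h₁ : (x.1 : ℕ) = 0 ∨ (x.1 : ℕ) = r - 1)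
    (h₂ : (x.2 : ℕ) = 0 ∨ (x.2 : ℕ) = s - 1) (p q : Fin r × Fin s) :
    l1Dist (cornerCoords x p) (cornerCoords x q) = gridDist p q := by
  have := p.1.isLt; have := q.1.isLt; have := p.2.isLt; have := q.2.isLt
  unfold l1Dist cornerCoords gridDist
  omega

theorem cornerCoords_injective {x : Fin r × Fin s} (h₁ : (x.1 : ℕ) = 0 ∨ (x.1 : ℕ) = r - 1)
    (h₂ : (x.2 : ℕ) = 0 ∨ (x.2 : ℕ) = s - 1) :
    Function.Injective (cornerCoords x) := by
  intro p q h
  have := p.1.isLt; have := q.1.isLt; have := p.2.isLt; have := q.2.isLt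
  simp only [cornerCoords, Prod.ext_iff] at h
  ext <;> omega

end Grid

theorem stmt_16_general (r s : ℕ) (S : Finset (Fin r × Fin s))
    (hgp : isGPSetD (gridDist (r := r) (s := s)) ↑S)
    (x : Fin r × Fin s) (hx : x ∈ S)
    (hcorner : ((x.1 : ℕ) = 0 ∨ (x.1 : ℕ) = r - 1) ∧ ((x.2 : ℕ) = 0 ∨ (x.2 : ℕ) = s - 1)) :
    S.card ≤ 3 := by
  obtain ⟨h₁, h₂⟩ := hcorner
  have hinj := cornerCoords_injective h₁ h₂
  rw [← Finset.card_image_of_injective S hinj]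
  refine card_le_three_of_isGPSetD_l1Dist ?_ ?_
  · rw [Finset.coe_image]
    exact hgp.image hinj (l1Dist_cornerCoords h₁ h₂)
  · simpa using Finset.mem_image_of_mem (cornerCoords x) hx

theorem stmt_16 (r s : ℕ) (hr : 2 ≤ r) (hs : 2 ≤ s) (S : Finset (Fin r × Fin s))
    (hgp : isGPSetD (gridDist (r := r) (s := s)) ↑S)
    (x : Fin r × Fin s) (hx : x ∈ S)
    (hcorner : ((x.1 : ℕ) = 0 ∨ (x.1 : ℕ) = r - 1) ∧ ((x.2 : ℕ) = 0 ∨ (x.2 : ℕ) = s - 1)) :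
    S.card ≤ 3 :=
  stmt_16_general r s S hgp x hx hcorner
end
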